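/- arXiv:0803.2722 — 5 statements merged into one kernel-verified Lean document; each statement's English description precedes it below -/
import Mathlib

section
/- In a Coxeter group W with simple generators S, two simple reflections s and s' are conjugate in W if and only if they lie in the same connected component of the graph Γ^odd whose vertex set is S and whose edges join pairs s, s' with m(s,s') odd (with m(s,s') = ∞ counted as even). -/
/-!
If `m(s,s') = 2k + 1`, then `(s s')^k` conjugates `s` to `s'`, so simple reflections joined by a
path in `Γ^odd` are conjugate. Conversely, sending the simple reflections of one component of
`Γ^odd` to `-1` and all others to `1` respects the Coxeter relations, because a relation
`(s s')^m = 1` between two components has `m` even; the resulting character `W → {±1}` is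
constant on conjugacy classes and separates that component from the others.
-/

/-- The graph `Γ^odd` on the simple generators: `s` and `s'` are adjacent exactly when
`m(s,s')` is odd (with `m(s,s') = ∞`, encoded as `0`, counted as even). -/
def oddCoxeterGraph {B : Type*} (M : CoxeterMatrix B) : SimpleGraph B where
  Adj i j := i ≠ j ∧ Odd (M i j)
  symm := by
    constructor
    intro i j ⟨h1, h2⟩
    exact ⟨h1.symm, by rwa [M.symmetric j i]⟩
  loopless := by
    constructor
    intro i h
    exact h.1 rfl

theorem isConj_of_mul_pow_odd_eq_one {G : Type*} [Group G] {a b : G} (ha : a * a = 1)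
    (hb : b * b = 1) {n : ℕ} (hn : Odd n) (hab : (a * b) ^ n = 1) : IsConj a b := by
  obtain ⟨k, rfl⟩ := hn
  have hinv : (a * b)⁻¹ = b * a := by
    rw [mul_inv_rev, inv_eq_of_mul_eq_one_right ha, inv_eq_of_mul_eq_one_right hb]
  have hsemi : a * (b * a) ^ k = (a * b) ^ k * a :=
    SemiconjBy.pow_right (mul_assoc a b a).symm k
  refine isConj_iff.2 ⟨(a * b) ^ k, ?_⟩
  calc (a * b) ^ k * a * ((a * b) ^ k)⁻¹ = (a * b) ^ k * a * (b * a) ^ k := by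
        rw [← inv_pow, hinv]
    _ = (a * b) ^ (2 * k) * a := by rw [mul_assoc, hsemi, ← mul_assoc, ← pow_add, two_mul]
    _ = (a * b)⁻¹ * a := by
        rw [eq_inv_of_mul_eq_one_left (by rwa [← pow_succ] : (a * b) ^ (2 * k) * (a * b) = 1)]
    _ = b := by rw [hinv, mul_assoc, ha, mul_one]

theorem CoxeterMatrix.isLiftable_of_eq_of_odd {B G : Type*} [CommGroup G] (M : CoxeterMatrix B)
    {f : B → G} (hsq : ∀ i, f i * f i = 1) (hodd : ∀ i j, Odd (M i j) → f i = f j) :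
    M.IsLiftable f := by
  intro i j
  rcases Nat.even_or_odd (M i j) with ⟨m, hm⟩ | ho
  · rw [hm, ← two_mul, pow_mul, sq, mul_mul_mul_comm, hsq, hsq, one_mul, one_pow]
  · rw [hodd i j ho, hsq, one_pow]

namespace CoxeterSystem

variable {B W : Type*} [Group W] {M : CoxeterMatrix B} (cs : CoxeterSystem M W)

theorem isConj_simple_of_odd {i j : B} (h : Odd (M i j)) :
    IsConj (cs.simple i) (cs.simple j) :=
  isConj_of_mul_pow_odd_eq_one (cs.simple_mul_simple_self i) (cs.simple_mul_simple_self j) h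
    (cs.simple_mul_simple_pow i j)

theorem isConj_simple_of_reachable {i j : B} (h : (oddCoxeterGraph M).Reachable i j) :
    IsConj (cs.simple i) (cs.simple j) :=
  Relation.reflTransGen_le_of_equivalence_of_le
    (r := fun i j ↦ IsConj (cs.simple i) (cs.simple j))
    ⟨fun _ ↦ IsConj.refl _, IsConj.symm, IsConj.trans⟩
    (fun _ _ hadj ↦ cs.isConj_simple_of_odd hadj.2) i j
    ((SimpleGraph.reachable_iff_reflTransGen i j).1 h)

open Classical in
noncomputable def oddComponentSign (s : B) : W →* ℤˣ :=
  cs.lift ⟨fun b ↦ if (oddCoxeterGraph M).Reachable s b then -1 else 1,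
    M.isLiftable_of_eq_of_odd (fun _ ↦ Int.units_mul_self _) fun i j ho ↦ by
      rcases eq_or_ne i j with rfl | hne
      · rfl
      · have hij : (oddCoxeterGraph M).Reachable i j := SimpleGraph.Adj.reachable ⟨hne, ho⟩
        have hiff : (oddCoxeterGraph M).Reachable s i ↔ (oddCoxeterGraph M).Reachable s j :=
          ⟨fun h ↦ h.trans hij, fun h ↦ h.trans hij.symm⟩
        simp only [hiff]⟩

theorem oddComponentSign_simple (s b : B) [Decidable ((oddCoxeterGraph M).Reachable s b)] :
    cs.oddComponentSign s (cs.simple b) =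
      if (oddCoxeterGraph M).Reachable s b then -1 else 1 := by
  rw [oddComponentSign, lift_apply_simple]
  congr

theorem reachable_of_isConj_simple {s s' : B} (h : IsConj (cs.simple s) (cs.simple s')) :
    (oddCoxeterGraph M).Reachable s s' := by
  classical
  have hsign := isConj_iff_eq.1 ((cs.oddComponentSign s).map_isConj h)
  rw [oddComponentSign_simple, oddComponentSign_simple, if_pos (SimpleGraph.Reachable.refl s)]
    at hsign
  by_contra hnr
  rw [if_neg hnr] at hsign
  exact absurd hsign (by decide)

end CoxeterSystem

/-- Two simple reflections `s`, `s'` of a Coxeter group are conjugate if and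
only if they lie in the same connected component of the graph `Γ^odd`. -/
theorem simple_isConj_iff_oddGraph_reachable
    {B W : Type*} [Group W] {M : CoxeterMatrix B} (cs : CoxeterSystem M W) (s s' : B) :
    IsConj (cs.simple s) (cs.simple s') ↔ (oddCoxeterGraph M).Reachable s s' :=
  ⟨cs.reachable_of_isConj_simple, cs.isConj_simple_of_reachable⟩
end

section
/- Let A be a crystallographic generalized Cartan matrix for a Coxeter group W (integer entries, a_{ss}=2, a_{ss'} ≤ 0 with a_{ss'}a_{s's} = 4cos²(π/m(s,s')) when m(s,s') < ∞ and a_{ss'}a_{s's} ≥ 4 when m(s,s') = ∞, and a_{ss'}=0 iff a_{s's}=0). If δ : S → ℝ_{>0} satisfies δ(s)a_{ss'} = δ(s')a_{s's} for all s, s' ∈ S, then δ(s) = δ(s') whenever s and s' are conjugate in W. -/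
/-!
For an edge `t — t'` of the odd graph (`m(t,t')` odd, hence `≥ 3`), the integer
`a_{tt'} a_{t't} = 4 cos²(π/m)` forces `m = 3` by Niven's theorem, so `a_{tt'} = a_{t't} = -1`
and the symmetrisability relation gives `δ t = δ t'`. Hence `δ` is constant on the components
of the odd graph. Conversely, conjugate simple reflections lie in one component: the character
`W → ℤˣ` sending the simple reflections of a component to `-1` and all others to `1` respects
the Coxeter relations, and takes the same value on conjugate elements.
-/

open Real

theorem eq_two_or_three_or_four_or_six_of_four_mul_cos_sq_pi_div_eq_intCast {m : ℕ} (hm : 2 ≤ m)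
    {n : ℤ} (h : 4 * cos (π / m) ^ 2 = n) : m = 2 ∨ m = 3 ∨ m = 4 ∨ m = 6 := by
  have hcos : cos (((2 / m : ℚ) : ℝ) * π) = ((n - 2) / 2 : ℚ) := by
    push_cast
    rw [show 2 / (m : ℝ) * π = 2 * (π / m) by ring, cos_two_mul, ← h]
    ring
  have hbnd : (2 / m : ℚ) ∈ Set.Icc 0 1 := by
    have hm' : (2 : ℚ) ≤ m := by exact_mod_cast hm
    exact ⟨by positivity, (div_le_one (by linarith)).mpr hm'⟩
  have hr := niven_angle_div_pi_eq ⟨_, hcos⟩ hbnd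
  simp only [Set.mem_insert_iff, Set.mem_singleton_iff] at hr
  rcases hr with h | h | h | h | h <;> field_simp at h <;> norm_cast at h <;> omega

theorem eq_one_of_four_mul_cos_sq_pi_div_eq_intCast_of_odd {m : ℕ} (hodd : Odd m) (hm : m ≠ 1)
    {n : ℤ} (h : 4 * cos (π / m) ^ 2 = n) : n = 1 := by
  have hm3 : m = 3 := by
    rcases eq_two_or_three_or_four_or_six_of_four_mul_cos_sq_pi_div_eq_intCast
      (by obtain ⟨k, rfl⟩ := hodd; omega) h with h | h | h | h <;>
      subst h <;> first | rfl | exact absurd hodd (by decide)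
  subst hm3
  rw [Nat.cast_ofNat, cos_pi_div_three] at h
  exact_mod_cast (by linarith : (n : ℝ) = 1)

theorem SimpleGraph.Reachable.apply_eq {V X : Type*} {G : SimpleGraph V} {f : V → X}
    (hf : ∀ u v, G.Adj u v → f u = f v) {u v : V} (h : G.Reachable u v) : f u = f v := by
  obtain ⟨p⟩ := h
  induction p with
  | nil => rfl
  | cons hadj _ ih => exact (hf _ _ hadj).trans ih

namespace CoxeterMatrix

variable {B : Type*} (M : CoxeterMatrix B)

def oddGraph : SimpleGraph B where
  Adj t t' := t ≠ t' ∧ Odd (M t t')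
  symm := ⟨fun t t' h ↦ ⟨h.1.symm, M.symmetric t t' ▸ h.2⟩⟩
  loopless := ⟨fun _ h ↦ h.1 rfl⟩

theorem oddGraph_reachable_of_odd {t t' : B} (h : Odd (M t t')) : M.oddGraph.Reachable t t' := by
  rcases eq_or_ne t t' with rfl | hne
  · rfl
  · exact SimpleGraph.Adj.reachable ⟨hne, h⟩

open Classical in
theorem isLiftable_sign_of_reachable (s : B) :
    M.IsLiftable fun t ↦ if M.oddGraph.Reachable s t then (-1 : ℤˣ) else 1 := by
  intro t t'
  rcases Nat.even_or_odd (M t t') with ⟨k, hk⟩ | hodd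
  · rw [hk, ← two_mul, pow_mul, Int.units_sq, one_pow]
  · have hiff : M.oddGraph.Reachable s t ↔ M.oddGraph.Reachable s t' :=
      ⟨(·.trans (M.oddGraph_reachable_of_odd hodd)),
        (·.trans (M.oddGraph_reachable_of_odd hodd).symm)⟩
    dsimp only
    simp only [hiff, Int.units_mul_self, one_pow]

end CoxeterMatrix

namespace CoxeterSystem

variable {B W : Type*} [Group W] {M : CoxeterMatrix B} (cs : CoxeterSystem M W)

theorem oddGraph_reachable_of_isConj {s s' : B} (h : IsConj (cs.simple s) (cs.simple s')) :
    M.oddGraph.Reachable s s' := by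
  set φ := cs.lift ⟨_, M.isLiftable_sign_of_reachable s⟩
  have hφ : φ (cs.simple s) = φ (cs.simple s') := isConj_iff_eq.mp (φ.map_isConj h)
  simp only [φ, cs.lift_apply_simple, SimpleGraph.Reachable.rfl, if_true] at hφ
  by_contra hs'
  simp [hs'] at hφ

end CoxeterSystem

theorem delta_eq_of_isConj_of_crystallographic_general
    {B W : Type*} [Group W] {M : CoxeterMatrix B} (cs : CoxeterSystem M W)
    (a : B → B → ℤ)
    (hoff : ∀ s s', s ≠ s' → a s s' ≤ 0)
    (hfin : ∀ s s', s ≠ s' → M s s' ≠ 0 →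
      ((a s s' : ℝ) * (a s' s : ℝ) = 4 * Real.cos (Real.pi / (M s s' : ℝ)) ^ 2))
    (δ : B → ℝ)
    (hδ : ∀ s s', δ s * (a s s' : ℝ) = δ s' * (a s' s : ℝ))
    (s s' : B) (hconj : IsConj (cs.simple s) (cs.simple s')) :
    δ s = δ s' := by
  have hadj : ∀ t t', M.oddGraph.Adj t t' → δ t = δ t' := by
    rintro t t' ⟨hne, hodd⟩
    have hprod : a t t' * a t' t = 1 :=
      eq_one_of_four_mul_cos_sq_pi_div_eq_intCast_of_odd hodd (M.off_diagonal t t' hne)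
        (by push_cast; exact (hfin t t' hne hodd.pos.ne').symm)
    rcases Int.mul_eq_one_iff_eq_one_or_neg_one.mp hprod with ⟨h1, -⟩ | ⟨h1, h2⟩
    · exact absurd (hoff t t' hne) (by omega)
    · simpa [h1, h2] using hδ t t'
  exact (cs.oddGraph_reachable_of_isConj hconj).apply_eq hadj

/-- Let `A` be a crystallographic generalized Cartan matrix for a Coxeter
group `W` (integer entries, `a s s = 2`, `a s s' ≤ 0` off the diagonal with
`a s s' * a s' s = 4 cos²(π / m(s,s'))` when `m(s,s') < ∞` and `a s s' * a s' s ≥ 4` when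
`m(s,s') = ∞` (encoded as `M s s' = 0`), and `a s s' = 0 ↔ a s' s = 0`).  If
`δ : S → ℝ_{>0}` satisfies `δ s * a s s' = δ s' * a s' s` for all `s, s'`, then
`δ s = δ s'` whenever the simple reflections `s` and `s'` are conjugate in `W`. -/
theorem delta_eq_of_isConj_of_crystallographic
    {B W : Type*} [Group W] {M : CoxeterMatrix B} (cs : CoxeterSystem M W)
    (a : B → B → ℤ)
    (hdiag : ∀ s, a s s = 2)
    (hoff : ∀ s s', s ≠ s' → a s s' ≤ 0)
    (hfin : ∀ s s', s ≠ s' → M s s' ≠ 0 →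
      ((a s s' : ℝ) * (a s' s : ℝ) = 4 * Real.cos (Real.pi / (M s s' : ℝ)) ^ 2))
    (hinf : ∀ s s', s ≠ s' → M s s' = 0 → (4 : ℤ) ≤ a s s' * a s' s)
    (hzero : ∀ s s', a s s' = 0 ↔ a s' s = 0)
    (δ : B → ℝ) (hδpos : ∀ s, 0 < δ s)
    (hδ : ∀ s s', δ s * (a s s' : ℝ) = δ s' * (a s' s : ℝ))
    (s s' : B) (hconj : IsConj (cs.simple s) (cs.simple s')) :
    δ s = δ s' :=
  delta_eq_of_isConj_of_crystallographic_general cs a hoff hfin δ hδ s s' hconj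
end

section
/- Let W be a Coxeter group with a root system Φ in V arising from a symmetrizable generalized Cartan matrix. Let s ∈ S and let w ∈ W_{⟨s⟩} = W_{S∖{s}}. Then the positive root β_{wsw⁻¹} lies in the nonnegative linear span of {α_s} ∪ {β_t : t ∈ inv(w)}. -/
/-- A geometric (reflection) representation of the Coxeter system `cs`, arising from a
symmetrizable generalized Cartan matrix `a` with symmetrizing function `δ`.  The field `α`
records the simple roots (a basis of `V`), `ρ` is the reflection representation, and `β`
assigns to each reflection `t = w sᵢ w⁻¹` its positive root (the member of `±(w · αᵢ)` lying
in the nonnegative span of the simple roots). -/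
structure CoxeterGeomRep {B W : Type*} [Group W] (M : CoxeterMatrix B)
    (cs : CoxeterSystem M W) (V : Type*) [AddCommGroup V] [Module ℝ V] where
  /-- the generalized Cartan matrix -/
  a : B → B → ℝ
  /-- the symmetrizing function -/
  δ : B → ℝ
  δ_pos : ∀ i, 0 < δ i
  symmetrize : ∀ i j, δ i * a i j = δ j * a j i
  δ_conj : ∀ i j, IsConj (cs.simple i) (cs.simple j) → δ i = δ j
  a_diag : ∀ i, a i i = 2
  a_offdiag : ∀ i j, i ≠ j → a i j ≤ 0
  a_fin : ∀ i j, i ≠ j → M i j ≠ 0 →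
    a i j * a j i = 4 * Real.cos (Real.pi / (M i j : ℝ)) ^ 2
  a_inf : ∀ i j, M i j = 0 → 4 ≤ a i j * a j i
  a_zero : ∀ i j, a i j = 0 ↔ a j i = 0
  /-- the simple roots, a basis of `V` -/
  α : Module.Basis B ℝ V
  /-- the reflection representation of `W` on `V` -/
  ρ : W →* (V ≃ₗ[ℝ] V)
  act : ∀ i j, ρ (cs.simple i) (α j) = α j - a i j • α i
  /-- the positive root associated to each reflection -/
  β : W → V
  β_root : ∀ (w : W) (i : B),
    β (w * cs.simple i * w⁻¹) = ρ w (α i) ∨ β (w * cs.simple i * w⁻¹) = -(ρ w (α i))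
  β_pos : ∀ t, cs.IsReflection t →
    ∃ c : B →₀ ℝ, (∀ i, 0 ≤ c i) ∧ β t = c.sum fun i r => r • α i

/-- `v` lies in the nonnegative linear span (the cone generated by) the set `X`. -/
def InCone {V : Type*} [AddCommGroup V] [Module ℝ V] (X : Set V) (v : V) : Prop :=
  ∃ (n : ℕ) (x : Fin n → V) (c : Fin n → ℝ),
    (∀ k, x k ∈ X) ∧ (∀ k, 0 ≤ c k) ∧ v = ∑ k, c k • x k

/-- `R` is the set of canonical generators of the reflection subgroup `W'`:  every positive
root of a reflection of `W'` lies in the nonnegative span of `{β_r : r ∈ R}`, and no `β_r`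
lies in the nonnegative span of the positive roots of the other reflections of `W'`. -/
def IsCanonicalGenerators {B W V : Type*} [Group W] [AddCommGroup V] [Module ℝ V]
    {M : CoxeterMatrix B} (cs : CoxeterSystem M W) (g : CoxeterGeomRep M cs V)
    (W' : Subgroup W) (R : Set W) : Prop :=
  R ⊆ {t | t ∈ W' ∧ cs.IsReflection t} ∧
  (∀ t ∈ W', cs.IsReflection t → InCone (g.β '' R) (g.β t)) ∧
  ∀ r ∈ R, ¬ InCone (g.β '' ({t | t ∈ W' ∧ cs.IsReflection t} \ {r})) (g.β r)


/-!
Positivity theorem: `w · α_i` is a nonnegative combination of simple roots if `ℓ(w s_i) > ℓ(w)`,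
and a nonpositive one otherwise. As in Humphreys (§5.4), strip from `w` an alternating suffix in
`s_i, s_j`; in the rank-two subsystem the coefficients of an alternating word applied to `α_i` are
Chebyshev values `S_k(2 cos (π / m_{ij}))` (or `S_k(t)` with `t ≥ 2` when `m_{ij} = ∞`), which are
nonnegative for `k < m_{ij}`.

For `w ∈ W_{⟨s⟩}` the `α_s`-coordinate of `w · α_s` is `1`, so `β_{w s w⁻¹} = w · α_s` and `s` is
not a right descent of `w`. Writing `w = u s_j` with `j` a right descent, `u ∈ W_{⟨s⟩}` and
`w · α_s = u · α_s - a_{js} (u · α_j)` with `-a_{js} ≥ 0`. By induction on the length `u · α_s`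
lies in the cone of `α_s` and the roots of `inv(u) ⊆ inv(w)`, while `u · α_j = β_{u s_j u⁻¹}` is
positive and `u s_j u⁻¹ ∈ inv(w)`.
-/

theorem InCone.of_mem_hull {V : Type*} [AddCommGroup V] [Module ℝ V] {X : Set V} {v : V}
    (hv : v ∈ PointedCone.hull ℝ X) : InCone X v := by
  obtain ⟨n, c, x, rfl⟩ := Submodule.mem_span_set'.mp hv
  exact ⟨n, fun k => x k, fun k => c k, fun k => (x k).2, fun k => (c k).2, rfl⟩

namespace Polynomial.Chebyshev

theorem S_eval_nonneg_of_two_le {t : ℝ} (ht : 2 ≤ t) {k : ℤ} (hk : -1 ≤ k) :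
    0 ≤ (S ℝ k).eval t := by
  have hmono : ∀ n : ℕ, 0 ≤ (S ℝ (n - 1)).eval t ∧ (S ℝ (n - 1)).eval t ≤ (S ℝ n).eval t := by
    intro n
    induction n with
    | zero => simp
    | succ n ih =>
      push_cast
      simp only [add_sub_cancel_right, S_add_one, eval_sub, eval_mul, eval_X]
      constructor <;> nlinarith [ih.1, ih.2]
  obtain ⟨n, rfl⟩ : ∃ n : ℕ, k = n - 1 := ⟨(k + 1).toNat, by omega⟩
  exact (hmono n).1

theorem S_eval_two_mul_cos_pi_div_nonneg {m : ℕ} (hm : 2 ≤ m) {k : ℤ} (hk : -1 ≤ k)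
    (hkm : k + 1 ≤ m) : 0 ≤ (S ℝ k).eval (2 * Real.cos (Real.pi / m)) := by
  have hm' : (2 : ℝ) ≤ m := by exact_mod_cast hm
  have hsin : 0 < Real.sin (Real.pi / m) :=
    Real.sin_pos_of_pos_of_lt_pi (by positivity) (div_lt_self Real.pi_pos (by linarith))
  rw [← mul_nonneg_iff_of_pos_right hsin, S_two_mul_real_cos]
  have hk0 : (0 : ℝ) ≤ k + 1 := by exact_mod_cast (by omega : (0 : ℤ) ≤ k + 1)
  have hkm' : (k : ℝ) + 1 ≤ m := by exact_mod_cast hkm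
  apply Real.sin_nonneg_of_nonneg_of_le_pi (by positivity)
  calc ((k : ℝ) + 1) * (Real.pi / m) ≤ m * (Real.pi / m) := by gcongr
    _ = Real.pi := by field_simp

end Polynomial.Chebyshev

namespace CoxeterSystem

variable {B W : Type*} [Group W] {M : CoxeterMatrix B} (cs : CoxeterSystem M W)

theorem exists_eq_mul_alternatingWord (w : W) (i j : B) (hi : ¬cs.IsRightDescent w i) :
    ∃ (u : W) (n : ℕ), w = u * cs.wordProd (alternatingWord i j n) ∧
      cs.length w = cs.length u + n ∧ ¬cs.IsRightDescent u i ∧ ¬cs.IsRightDescent u j := by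
  induction hw : cs.length w using Nat.strong_induction_on generalizing w i j with
  | _ N ih =>
  by_cases hj : cs.IsRightDescent w j
  · have hlen := cs.isRightDescent_iff.mp hj
    obtain ⟨u, n, hu, hulen, huj, hui⟩ := ih _ (by omega) (w * cs.simple j) j i
      (cs.isRightDescent_iff_not_isRightDescent_mul.mp hj) rfl
    refine ⟨u, n + 1, ?_, by omega, hui, huj⟩
    rw [alternatingWord_succ, wordProd_concat, ← mul_assoc, ← hu, simple_mul_simple_cancel_right]
  · exact ⟨w, 0, by simp [alternatingWord], by omega, hi, hj⟩

theorem add_one_le_of_le_length_mul_alternatingWord_mul_simple {u : W} {i j : B} {n : ℕ}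
    (h : cs.length u + (n + 1) ≤
      cs.length (u * cs.wordProd (alternatingWord i j n) * cs.simple i))
    (hM : M i j ≠ 0) : n + 1 ≤ M i j := by
  rw [mul_assoc, ← wordProd_concat, ← alternatingWord_succ] at h
  have hred : cs.IsReduced (alternatingWord j i (n + 1)) := by
    have := cs.length_mul_le u (cs.wordProd (alternatingWord j i (n + 1)))
    have := cs.length_wordProd_le (alternatingWord j i (n + 1))
    unfold IsReduced
    rw [length_alternatingWord] at *
    omega
  by_contra! hlt
  exact cs.not_isReduced_alternatingWord j i (M.symmetric i j ▸ hM)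
    (by rw [M.symmetric]; exact hlt) hred

variable {cs} in
theorem IsLeftInversion.mul_simple {w t : W} {j : B} (ht : cs.IsLeftInversion w t)
    (hj : ¬cs.IsRightDescent w j) : cs.IsLeftInversion (w * cs.simple j) t := by
  refine ⟨ht.1, ?_⟩
  have := ht.2
  have := cs.not_isRightDescent_iff.mp hj
  rcases cs.length_mul_simple (t * w) j with h | h <;> rw [mul_assoc] at h <;> omega

theorem isLeftInversion_mul_simple_conj {w : W} {j : B} (hj : ¬cs.IsRightDescent w j) :
    cs.IsLeftInversion (w * cs.simple j) (w * cs.simple j * w⁻¹) := by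
  refine ⟨(cs.isReflection_simple j).conj w, ?_⟩
  have := cs.not_isRightDescent_iff.mp hj
  rw [show w * cs.simple j * w⁻¹ * (w * cs.simple j) = w by simp [mul_assoc]]
  omega

end CoxeterSystem

namespace CoxeterGeomRep

open CoxeterSystem Polynomial Chebyshev

variable {B W : Type*} [Group W] {M : CoxeterMatrix B} {cs : CoxeterSystem M W}
  {V : Type*} [AddCommGroup V] [Module ℝ V] (g : CoxeterGeomRep M cs V)

theorem rho_mul_apply (x y : W) (v : V) : g.ρ (x * y) v = g.ρ x (g.ρ y v) := by
  rw [map_mul, LinearEquiv.mul_apply]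

theorem rho_simple_alpha_self (i : B) : g.ρ (cs.simple i) (g.α i) = -g.α i := by
  rw [g.act, g.a_diag]
  module

theorem repr_beta_nonneg {t : W} (ht : cs.IsReflection t) : 0 ≤ g.α.repr (g.β t) := by
  obtain ⟨c, hc, hβ⟩ := g.β_pos t ht
  rw [hβ, ← Finsupp.linearCombination_apply, Module.Basis.repr_linearCombination]
  exact hc

theorem rho_wordProd_alternatingWord_alpha (i j : B) {c t : ℝ} (hc : c * t = -g.a j i)
    (ht : -g.a i j * c = t) (n : ℕ) :
    g.ρ (cs.wordProd (alternatingWord i j n)) (g.α i) =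
      if Even n then (S ℝ n).eval t • g.α i + (c * (S ℝ (n - 1)).eval t) • g.α j
      else (S ℝ (n - 1)).eval t • g.α i + (c * (S ℝ n).eval t) • g.α j := by
  induction n with
  | zero => simp [alternatingWord]
  | succ n ih =>
    rw [alternatingWord_succ', wordProd_cons, rho_mul_apply, ih]
    push_cast
    simp only [add_sub_cancel_right, S_add_one, eval_sub, eval_mul, eval_X]
    by_cases hn : Even n
    · have hn' : ¬Even (n + 1) := by simpa [Nat.even_add_one] using hn
      simp only [if_pos hn, if_neg hn', map_add, map_smul, g.act, g.a_diag]
      linear_combination (norm := module) (-(S ℝ n).eval t) • hc • g.α j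
    · have hn' : Even (n + 1) := Nat.even_add_one.mpr hn
      simp only [if_neg hn, if_pos hn', map_add, map_smul, g.act, g.a_diag]
      linear_combination (norm := module) ((S ℝ n).eval t) • ht • g.α i

theorem S_eval_sqrt_mul_sqrt_nonneg {i j : B} (hij : i ≠ j) {k : ℤ} (hk : -1 ≤ k)
    (hkM : M i j ≠ 0 → k + 1 ≤ M i j) :
    0 ≤ (S ℝ k).eval (√(-g.a i j) * √(-g.a j i)) := by
  rw [← Real.sqrt_mul (neg_nonneg.mpr (g.a_offdiag i j hij)), neg_mul_neg]
  by_cases hM : M i j = 0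
  · refine S_eval_nonneg_of_two_le ?_ hk
    rw [Real.le_sqrt' two_pos]
    linarith [g.a_inf i j hM]
  · have hm : 2 ≤ M i j := by have := M.off_diagonal i j hij; omega
    have hcos : 0 ≤ Real.cos (Real.pi / M i j) :=
      Real.cos_nonneg_of_neg_pi_div_two_le_of_le
        (by linarith [Real.pi_pos, show 0 ≤ Real.pi / M i j by positivity])
        (div_le_div_of_nonneg_left Real.pi_pos.le two_pos (by exact_mod_cast hm))
    rw [g.a_fin i j hij hM, show 4 * Real.cos (Real.pi / M i j) ^ 2
      = (2 * Real.cos (Real.pi / M i j)) ^ 2 by ring, Real.sqrt_sq (by positivity)]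
    exact S_eval_two_mul_cos_pi_div_nonneg hm hk (by exact_mod_cast hkM hM)

theorem exists_rho_wordProd_alternatingWord_alpha_eq {i j : B} (hij : i ≠ j) {n : ℕ}
    (hn : M i j ≠ 0 → n + 1 ≤ M i j) :
    ∃ a b : ℝ, 0 ≤ a ∧ 0 ≤ b ∧
      g.ρ (cs.wordProd (alternatingWord i j n)) (g.α i) = a • g.α i + b • g.α j := by
  have hP : 0 ≤ -g.a i j := neg_nonneg.mpr (g.a_offdiag i j hij)
  have hQ : 0 ≤ -g.a j i := neg_nonneg.mpr (g.a_offdiag j i hij.symm)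
  -- Rescaling `α_j` by `c` turns the rank-two Cartan matrix into `[[2, -t], [-t, 2]]`;
  -- when `a_{ij} = 0` (hence `a_{ji} = 0`) the junk value `c = x / 0 = 0` still fits.
  set t := √(-g.a i j) * √(-g.a j i)
  set c := √(-g.a j i) / √(-g.a i j)
  have ⟨hc, ht⟩ : c * t = -g.a j i ∧ -g.a i j * c = t := by
    by_cases h0 : g.a i j = 0
    · simp [t, c, h0, (g.a_zero i j).mp h0]
    have hsP : √(-g.a i j) ≠ 0 :=
      Real.sqrt_ne_zero'.mpr (lt_of_le_of_ne hP (Ne.symm (neg_ne_zero.mpr h0)))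
    constructor <;> simp only [t, c] <;> field_simp
    · rw [Real.sq_sqrt hQ]
    · rw [Real.sq_sqrt hP]
      ring
  have hS : ∀ k : ℤ, -1 ≤ k → k ≤ n → 0 ≤ (S ℝ k).eval t := fun k hk hkn =>
    g.S_eval_sqrt_mul_sqrt_nonneg hij hk fun hM => by have := hn hM; omega
  have hc0 : 0 ≤ c := by positivity
  rw [g.rho_wordProd_alternatingWord_alpha i j hc ht n]
  split_ifs
  · exact ⟨_, _, hS n (by omega) le_rfl, mul_nonneg hc0 (hS (n - 1) (by omega) (by omega)), rfl⟩
  · exact ⟨_, _, hS (n - 1) (by omega) (by omega), mul_nonneg hc0 (hS n (by omega) le_rfl), rfl⟩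

theorem repr_rho_alpha_nonneg {w : W} {i : B} (hi : ¬cs.IsRightDescent w i) :
    0 ≤ g.α.repr (g.ρ w (g.α i)) := by
  induction hw : cs.length w using Nat.strong_induction_on generalizing w i with
  | _ N ih =>
  rcases eq_or_ne w 1 with rfl | hw1
  · simp
  obtain ⟨j, hj⟩ := cs.exists_rightDescent_of_ne_one hw1
  have hij : i ≠ j := by rintro rfl; exact hi hj
  obtain ⟨u, n, rfl, hlen, hui, huj⟩ := cs.exists_eq_mul_alternatingWord w i j hi
  have hn : n ≠ 0 := by rintro rfl; simp [alternatingWord] at hj; exact huj hj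
  have hbound : M i j ≠ 0 → n + 1 ≤ M i j :=
    cs.add_one_le_of_le_length_mul_alternatingWord_mul_simple (u := u)
      (by have := cs.not_isRightDescent_iff.mp hi; omega)
  obtain ⟨a, b, ha, hb, hab⟩ := g.exists_rho_wordProd_alternatingWord_alpha_eq hij hbound
  have hui' := ih _ (by omega) hui rfl
  have huj' := ih _ (by omega) huj rfl
  rw [rho_mul_apply, hab, map_add, map_smul, map_smul, map_add, map_smul, map_smul]
  positivity

theorem repr_rho_alpha_nonpos {w : W} {i : B} (hi : cs.IsRightDescent w i) :
    g.α.repr (g.ρ w (g.α i)) ≤ 0 := by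
  have := g.repr_rho_alpha_nonneg (cs.isRightDescent_iff_not_isRightDescent_mul.mp hi)
  rwa [rho_mul_apply, rho_simple_alpha_self, map_neg, map_neg, neg_nonneg] at this

theorem beta_conj_eq_of_repr_pos {w : W} {i b : B} (h : 0 < g.α.repr (g.ρ w (g.α i)) b) :
    g.β (w * cs.simple i * w⁻¹) = g.ρ w (g.α i) := by
  refine (g.β_root w i).resolve_right fun hneg => ?_
  have := g.repr_beta_nonneg ((cs.isReflection_simple i).conj w) b
  rw [hneg, map_neg, Finsupp.neg_apply, Finsupp.coe_zero, Pi.zero_apply] at this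
  linarith

theorem beta_conj_eq_of_not_isRightDescent {w : W} {i : B} (hi : ¬cs.IsRightDescent w i) :
    g.β (w * cs.simple i * w⁻¹) = g.ρ w (g.α i) := by
  have hne : g.α.repr (g.ρ w (g.α i)) ≠ 0 := by simp [g.α.ne_zero]
  obtain ⟨b, hb⟩ := (Finsupp.lt_def.mp ((g.repr_rho_alpha_nonneg hi).lt_of_ne hne.symm)).2
  exact g.beta_conj_eq_of_repr_pos hb

theorem repr_rho_simple_apply_of_ne {i b : B} (hib : i ≠ b) (v : V) :
    g.α.repr (g.ρ (cs.simple i) v) b = g.α.repr v b := by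
  have : g.α.coord b ∘ₗ (g.ρ (cs.simple i)).toLinearMap = g.α.coord b :=
    g.α.ext fun j => by simp [g.act, Finsupp.single_eq_of_ne' hib]
  simpa using LinearMap.congr_fun this v

theorem repr_rho_apply_of_mem_closure {s : B} {w : W}
    (hw : w ∈ Subgroup.closure (cs.simple '' {i | i ≠ s})) (v : V) :
    g.α.repr (g.ρ w v) s = g.α.repr v s := by
  induction hw using Subgroup.closure_induction generalizing v with
  | mem x hx =>
    obtain ⟨i, hi, rfl⟩ := hx
    exact g.repr_rho_simple_apply_of_ne hi v
  | one => simp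
  | mul x y _ _ hx hy => rw [rho_mul_apply, hx, hy]
  | inv x _ hx => rw [← hx, ← rho_mul_apply, mul_inv_cancel, map_one, LinearEquiv.coe_one, id]

theorem beta_conj_eq_of_mem_closure {s : B} {w : W}
    (hw : w ∈ Subgroup.closure (cs.simple '' {i | i ≠ s})) :
    g.β (w * cs.simple s * w⁻¹) = g.ρ w (g.α s) :=
  g.beta_conj_eq_of_repr_pos (b := s) (by simp [g.repr_rho_apply_of_mem_closure hw])

theorem rho_alpha_mem_hull_of_mem_closure {s : B} {w : W}
    (hw : w ∈ Subgroup.closure (cs.simple '' {i | i ≠ s})) :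
    g.ρ w (g.α s) ∈ PointedCone.hull ℝ ({g.α s} ∪ g.β '' {t | cs.IsLeftInversion w t}) := by
  induction hN : cs.length w using Nat.strong_induction_on generalizing w with
  | _ N ih =>
  rcases eq_or_ne w 1 with rfl | hw1
  · rw [map_one, LinearEquiv.coe_one, id]
    exact PointedCone.subset_hull (Set.mem_union_left _ rfl)
  obtain ⟨j, hj⟩ := cs.exists_rightDescent_of_ne_one hw1
  have hjs : j ≠ s := by
    rintro rfl
    have := g.repr_rho_alpha_nonpos hj j
    norm_num [g.repr_rho_apply_of_mem_closure hw] at this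
  obtain ⟨u, rfl⟩ : ∃ u, w = u * cs.simple j := ⟨w * cs.simple j, by simp⟩
  have huj : ¬cs.IsRightDescent u j := by
    simpa using cs.isRightDescent_iff_not_isRightDescent_mul.mp hj
  have hu : u ∈ Subgroup.closure (cs.simple '' {i | i ≠ s}) := by
    simpa using mul_mem hw (Subgroup.subset_closure ⟨j, hjs, rfl⟩)
  have hlen := cs.not_isRightDescent_iff.mp huj
  set C := PointedCone.hull ℝ ({g.α s} ∪ g.β '' {t | cs.IsLeftInversion (u * cs.simple j) t})
  have hαs : g.ρ u (g.α s) ∈ C :=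
    Submodule.span_mono
      (Set.union_subset_union_right _ (Set.image_mono fun t ht => ht.mul_simple huj))
      (ih _ (by omega) hu rfl)
  have hαj : g.ρ u (g.α j) ∈ C :=
    PointedCone.subset_hull (Set.mem_union_right _
      ⟨_, cs.isLeftInversion_mul_simple_conj huj, g.beta_conj_eq_of_not_isRightDescent huj⟩)
  rw [rho_mul_apply, g.act, map_sub, map_smul, sub_eq_add_neg, ← neg_smul]
  exact add_mem hαs (PointedCone.smul_mem _ (neg_nonneg.mpr (g.a_offdiag j s hjs)) hαj)

end CoxeterGeomRep

/-- Let `s ∈ S` and let `w` lie in the standard parabolic subgroup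
`W_{⟨s⟩} = W_{S∖{s}}`.  Then the positive root `β_{w s w⁻¹}` lies in the nonnegative linear
span of `{α_s} ∪ {β_t : t ∈ inv(w)}`. -/
theorem beta_conj_mem_cone_of_mem_parabolic
    {B W V : Type*} [Group W] [AddCommGroup V] [Module ℝ V]
    {M : CoxeterMatrix B} (cs : CoxeterSystem M W) (g : CoxeterGeomRep M cs V)
    (s : B) (w : W) (hw : w ∈ Subgroup.closure (cs.simple '' {i | i ≠ s})) :
    InCone ({g.α s} ∪ g.β '' {t | cs.IsLeftInversion w t})
      (g.β (w * cs.simple s * w⁻¹)) := by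
  rw [g.beta_conj_eq_of_mem_closure hw]
  exact .of_mem_hull (g.rho_alpha_mem_hull_of_mem_closure hw)
end

section
/- Let W be a Coxeter group and w ∈ W. If every cover reflection of w lies in the standard parabolic subgroup W_J, then w ∈ W_J. -/
/-- `t` is a cover reflection of `w`: an inversion of `w` with `t * w = w * s` for some
simple generator `s` (equivalently, `w` covers `t * w` in the right weak order). -/
def IsCoverReflection {B W : Type*} [Group W] {M : CoxeterMatrix B}
    (cs : CoxeterSystem M W) (w t : W) : Prop :=
  cs.IsLeftInversion w t ∧ ∃ s : B, t * w = w * cs.simple s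

/-! Let `x = v * w` have minimal length in the coset `W_J w`. Minimality makes lengths add,
`ℓ (u * x) = ℓ u + ℓ x` for `u ∈ W_J`: otherwise the exchange condition, applied to a left
descent `s` of `u * x`, either shortens `u` or produces `u⁻¹ s u ∈ W_J` with `u⁻¹ s u x` shorter
than `x`. The exchange condition itself comes from the action of `W` on `W × ZMod 2` in which the
second coordinate records, mod 2, how often a reflection occurs in a left inversion sequence.

If `x ≠ 1`, a right descent `s` of `x` is then also one of `w = v⁻¹ x`, so `t = w s w⁻¹` is a cover
reflection of `w` and lies in `W_J`. But `(v t v⁻¹) x = x s` is shorter than `x`. Hence `x = 1`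
and `w = v⁻¹ ∈ W_J`. -/

open List

namespace CoxeterSystem

variable {B W : Type*} [Group W] {M : CoxeterMatrix B} (cs : CoxeterSystem M W)

local prefix:100 "s" => cs.simple
local prefix:100 "π" => cs.wordProd
local prefix:100 "ℓ" => cs.length
local prefix:100 "lis " => cs.leftInvSeq

theorem simple_mul_mul_simple_eq_simple_iff (i : B) (t : W) : s i * t * s i = s i ↔ t = s i := by
  constructor
  · intro h
    simpa [mul_assoc] using congrArg (fun x => s i * x * s i) h
  · rintro rfl
    simp

theorem prod_map_alternatingWord_two_mul {G : Type*} [Monoid G] (f : B → G) (i i' : B) (m : ℕ) :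
    ((alternatingWord i i' (2 * m)).map f).prod = (f i * f i') ^ m := by
  induction m with
  | zero => simp [alternatingWord]
  | succ m ih =>
    rw [show 2 * (m + 1) = 2 * m + 1 + 1 by ring, alternatingWord_succ', alternatingWord_succ']
    simp [ih, pow_succ', mul_assoc]

section ReflectionSign

variable [DecidableEq W]

theorem count_map_conj_simple (i : B) (L : List W) (u : W) :
    (L.map (MulAut.conj (s i))).count u = L.count (s i * u * s i) := by
  conv_lhs => rw [show u = MulAut.conj (s i) (s i * u * s i) by simp [mul_assoc]]
  exact count_map_of_injective _ _ (MulAut.conj (s i)).injective _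

-- The action of `s i` on pairs (reflection, sign) from the standard proof of the exchange
-- condition, extended to all of `W` so that no subtype of reflections is needed.
def reflPerm (i : B) : Equiv.Perm (W × ZMod 2) :=
  Function.Involutive.toPerm (fun p => (s i * p.1 * s i, p.2 + if p.1 = s i then 1 else 0))
    (by
      rintro ⟨t, e⟩
      simp only [simple_mul_mul_simple_eq_simple_iff, add_assoc, CharTwo.add_self_eq_zero, add_zero]
      simp [mul_assoc])

theorem reflPerm_apply (i : B) (t : W) (e : ZMod 2) :
    cs.reflPerm i (t, e) = (s i * t * s i, e + if t = s i then 1 else 0) := rfl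

theorem prod_map_reflPerm_apply (ω : List B) (u : W) (e : ZMod 2) :
    (ω.map cs.reflPerm).prod ((π ω)⁻¹ * u * π ω, e) = (u, e + (lis ω).count u) := by
  induction ω generalizing u e with
  | nil => simp
  | cons i ω ih =>
    have hconj : (π (i :: ω))⁻¹ * u * π (i :: ω) = (π ω)⁻¹ * (s i * u * s i) * π ω := by
      simp [wordProd_cons, mul_assoc]
    have hcount : (lis (i :: ω)).count u =
        (lis ω).count (s i * u * s i) + if u = s i then 1 else 0 := by
      simp only [leftInvSeq, count_cons, count_map_conj_simple, beq_iff_eq, @eq_comm _ (s i) u]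
    rw [map_cons, prod_cons, Equiv.Perm.mul_apply, hconj, ih, reflPerm_apply, hcount]
    simp only [simple_mul_mul_simple_eq_simple_iff]
    simp [mul_assoc, add_assoc]

theorem even_count_leftInvSeq_alternatingWord (i i' : B) (u : W) :
    Even ((lis (alternatingWord i i' (2 * M i i'))).count u) := by
  set L := lis (alternatingWord i i' (2 * M i i'))
  have hperiodic : L.drop (M i i') = L.take (M i i') := by
    refine ext_getElem (by simp [L]; omega) fun k h₁ _ => ?_
    have hk : k < M i i' := by simp [L] at h₁; omega
    simp only [L, getElem_drop, getElem_take]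
    rw [getElem_leftInvSeq_alternatingWord cs i i' _ _ (by omega),
      getElem_leftInvSeq_alternatingWord cs i i' _ _ (by omega)]
    simp [prod_alternatingWord_eq_mul_pow, pow_add, Nat.mul_add_div]
  rw [← take_append_drop (M i i') L, count_append, hperiodic]
  exact ⟨_, rfl⟩

theorem isLiftable_reflPerm : M.IsLiftable cs.reflPerm := by
  intro i i'
  rw [← prod_map_alternatingWord_two_mul]
  ext1 ⟨u, e⟩
  have hπ : π (alternatingWord i i' (2 * M i i')) = 1 := by
    simp [prod_alternatingWord_eq_mul_pow]
  simpa [hπ, (cs.even_count_leftInvSeq_alternatingWord i i' u).natCast_zmod_two] using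
    cs.prod_map_reflPerm_apply (alternatingWord i i' (2 * M i i')) u e

def reflSign : W →* Equiv.Perm (W × ZMod 2) := cs.lift ⟨cs.reflPerm, cs.isLiftable_reflPerm⟩

theorem reflSign_wordProd_apply (ω : List B) (u : W) (e : ZMod 2) :
    cs.reflSign (π ω) ((π ω)⁻¹ * u * π ω, e) = (u, e + (lis ω).count u) := by
  rw [← cs.prod_map_reflPerm_apply]
  congr 1
  simp [wordProd, map_list_prod, reflSign, Function.comp_def, lift_apply_simple]

theorem natCast_count_leftInvSeq_eq {ω ω' : List B} (h : π ω = π ω') (u : W) :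
    ((lis ω).count u : ZMod 2) = (lis ω').count u := by
  have h₁ := cs.reflSign_wordProd_apply ω u 0
  rw [h, cs.reflSign_wordProd_apply ω' u 0] at h₁
  simpa using (congrArg Prod.snd h₁).symm

end ReflectionSign

theorem simple_mem_leftInvSeq_of_isLeftDescent {w : W} {j : B} (hj : cs.IsLeftDescent w j)
    {ω : List B} (hω : π ω = w) : s j ∈ lis ω := by
  classical
  obtain ⟨ρ, hρ, hρw⟩ := cs.exists_isReduced (s j * w)
  have hρ_not_mem : s j ∉ lis ρ := fun hmem => by
    have := (cs.isLeftInversion_of_mem_leftInvSeq hρ hmem).2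
    rw [← hρw, simple_mul_simple_cancel_left] at this
    exact lt_asymm hj this
  -- `j :: ρ` is a word for `w` whose left inversion sequence contains `s j` exactly once.
  have hcount : (lis (j :: ρ)).count (s j) = 1 := by
    simp [leftInvSeq, count_map_conj_simple, count_eq_zero_of_not_mem hρ_not_mem]
  have hparity := cs.natCast_count_leftInvSeq_eq (ω := ω) (ω' := j :: ρ)
    (by rw [wordProd_cons, ← hρw, simple_mul_simple_cancel_left, hω]) (s j)
  rw [hcount] at hparity
  by_contra hnot
  rw [count_eq_zero_of_not_mem hnot] at hparity
  exact absurd hparity (by decide)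

theorem exists_eraseIdx_eq_simple_mul {w : W} {j : B} (hj : cs.IsLeftDescent w j)
    {ω : List B} (hω : π ω = w) : ∃ k < ω.length, s j * w = π (ω.eraseIdx k) := by
  obtain ⟨k, hk, hkj⟩ := getElem_of_mem (cs.simple_mem_leftInvSeq_of_isLeftDescent hj hω)
  refine ⟨k, by simpa using hk, ?_⟩
  rw [← getD_leftInvSeq_mul_wordProd, getD_eq_getElem _ _ hk, hkj, hω]

theorem isLeftDescent_or_length_conj_mul_lt {a b : W} {j : B} (h : cs.IsLeftDescent (a * b) j) :
    cs.IsLeftDescent a j ∨ ℓ (a⁻¹ * s j * a * b) < ℓ b := by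
  obtain ⟨α, hα, rfl⟩ := cs.exists_isReduced a
  obtain ⟨β, hβ, rfl⟩ := cs.exists_isReduced b
  obtain ⟨k, hk, hkeq⟩ := cs.exists_eraseIdx_eq_simple_mul h (wordProd_append cs α β)
  rw [length_append] at hk
  rcases lt_or_ge k α.length with hkα | hkα
  · left
    rw [eraseIdx_append_of_lt_length hkα, wordProd_append, ← mul_assoc] at hkeq
    have hle := cs.length_wordProd_le (α.eraseIdx k)
    rw [IsLeftDescent, mul_right_cancel hkeq, hα]
    rw [length_eraseIdx_of_lt hkα] at hle
    omega
  · right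
    rw [eraseIdx_append_of_length_le hkα, wordProd_append] at hkeq
    have hconj : (π α)⁻¹ * s j * π α * π β = π (β.eraseIdx (k - α.length)) := by
      simp [mul_assoc, hkeq]
    have hle := cs.length_wordProd_le (β.eraseIdx (k - α.length))
    rw [length_eraseIdx_of_lt (by omega)] at hle
    rw [hconj, hβ]
    omega

theorem length_mul_eq_add_of_forall_length_le {J : Set B} {x : W}
    (hmin : ∀ v ∈ Subgroup.closure (cs.simple '' J), ℓ x ≤ ℓ (v * x))
    {v : W} (hv : v ∈ Subgroup.closure (cs.simple '' J)) : ℓ (v * x) = ℓ v + ℓ x := by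
  have step : ∀ j ∈ J, ∀ v ∈ Subgroup.closure (cs.simple '' J), ℓ (v * x) = ℓ v + ℓ x →
      ℓ (s j * v * x) = ℓ (s j * v) + ℓ x := by
    intro j hj v hv ih
    have hsub := cs.length_mul_le (s j * v) x
    rw [mul_assoc] at hsub ⊢
    rcases cs.length_simple_mul (v * x) j with hup | hdown
    · have := cs.length_simple_mul v j
      omega
    · have hdesc : cs.IsLeftDescent (v * x) j := by rw [IsLeftDescent]; omega
      rcases cs.isLeftDescent_or_length_conj_mul_lt hdesc with hv' | hx
      · have := cs.length_simple_mul v j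
        rw [IsLeftDescent] at hv'
        omega
      · have hconj : v⁻¹ * s j * v ∈ Subgroup.closure (cs.simple '' J) :=
          mul_mem (mul_mem (inv_mem hv) (Subgroup.subset_closure ⟨j, hj, rfl⟩)) hv
        exact absurd (hmin _ hconj) (not_le.2 hx)
  induction hv using Subgroup.closure_induction_left with
  | one => simp
  | mul_left _ hs v hv ih =>
    obtain ⟨j, hj, rfl⟩ := hs
    exact step j hj v hv ih
  | inv_mul_cancel _ hs v hv ih =>
    obtain ⟨j, hj, rfl⟩ := hs
    rw [inv_simple]
    exact step j hj v hv ih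

theorem isRightDescent_mul_of_forall_length_le {J : Set B} {x : W}
    (hmin : ∀ v ∈ Subgroup.closure (cs.simple '' J), ℓ x ≤ ℓ (v * x))
    {v : W} (hv : v ∈ Subgroup.closure (cs.simple '' J)) {i : B} (hi : cs.IsRightDescent x i) :
    cs.IsRightDescent (v * x) i := calc
  ℓ (v * x * s i) = ℓ (v * (x * s i)) := by rw [mul_assoc]
  _ ≤ ℓ v + ℓ (x * s i) := cs.length_mul_le _ _
  _ < ℓ v + ℓ x := by rw [IsRightDescent] at hi; omega
  _ = ℓ (v * x) := (cs.length_mul_eq_add_of_forall_length_le hmin hv).symm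

end CoxeterSystem

theorem CoxeterSystem.IsRightDescent.isCoverReflection {B W : Type*} [Group W]
    {M : CoxeterMatrix B} {cs : CoxeterSystem M W} {w : W} {i : B} (hi : cs.IsRightDescent w i) :
    IsCoverReflection cs w (w * cs.simple i * w⁻¹) := by
  have hcomm : w * cs.simple i * w⁻¹ * w = w * cs.simple i := inv_mul_cancel_right _ _
  exact ⟨⟨(cs.isReflection_simple i).conj w, by rw [hcomm]; exact hi⟩, i, hcomm⟩

/-- If every cover reflection of `w` lies in the standard parabolic
subgroup `W_J`, then `w ∈ W_J`. -/
theorem mem_parabolic_of_cover_reflections_mem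
    {B W : Type*} [Group W] {M : CoxeterMatrix B} (cs : CoxeterSystem M W)
    (J : Set B) (w : W)
    (h : ∀ t, IsCoverReflection cs w t → t ∈ Subgroup.closure (cs.simple '' J)) :
    w ∈ Subgroup.closure (cs.simple '' J) := by
  set P := Subgroup.closure (cs.simple '' J)
  obtain ⟨x, ⟨v, hv, rfl⟩, hx_min⟩ := (measure cs.length).wf.has_min {x | ∃ v ∈ P, v * w = x}
    ⟨w, 1, P.one_mem, one_mul w⟩
  have hmin : ∀ u ∈ P, cs.length (v * w) ≤ cs.length (u * (v * w)) := fun u hu =>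
    not_lt.1 (hx_min _ ⟨u * v, P.mul_mem hu hv, mul_assoc u v w⟩)
  suffices hx : v * w = 1 by
    rw [eq_inv_of_mul_eq_one_right hx]
    exact P.inv_mem hv
  by_contra hx
  obtain ⟨i, hi⟩ := cs.exists_rightDescent_of_ne_one hx
  have hwi : cs.IsRightDescent w i := by
    simpa using cs.isRightDescent_mul_of_forall_length_le hmin (P.inv_mem hv) hi
  have ht : w * cs.simple i * w⁻¹ ∈ P := h _ hwi.isCoverReflection
  have hshort := hmin _ (P.mul_mem (P.mul_mem hv ht) (P.inv_mem hv))
  rw [show v * (w * cs.simple i * w⁻¹) * v⁻¹ * (v * w) = v * w * cs.simple i by group] at hshort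
  exact absurd hi (not_lt.2 hshort)
end

section
/- Let W be a Coxeter group with symmetrizable Cartan matrix, c a Coxeter element with reduced word s₁⋯s_n, and E_c the Euler form defined on simple co-roots and simple roots by E_c(α^∨_{s_i}, α_{s_j}) = a_{s_i s_j} if i > j, 1 if i = j, and 0 if i < j. If s is initial or final in c, then E_c(β^∨, β') = E_{scs}(sβ^∨, sβ') for all β^∨, β' in V. -/
/-- `F` is the Euler form `E_c` for the Coxeter element `c` given by the reduced word `l`
(an enumeration of the simple generators):  on simple coroots and simple roots it is given
by `E_c(α^∨_{s_i}, α_{s_j}) = a_{s_i s_j}` if `i > j`, `1` if `i = j`, `0` if `i < j`. -/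
def IsEulerForm {B W V : Type*} [Group W] [AddCommGroup V] [Module ℝ V]
    {M : CoxeterMatrix B} (cs : CoxeterSystem M W) (g : CoxeterGeomRep M cs V)
    (l : List B) (F : V →ₗ[ℝ] V →ₗ[ℝ] ℝ) : Prop :=
  ∀ i j : Fin l.length,
    F ((g.δ (l.get i))⁻¹ • g.α (l.get i)) (g.α (l.get j)) =
      if (j : ℕ) < (i : ℕ) then g.a (l.get i) (l.get j)
      else if (i : ℕ) = (j : ℕ) then 1 else 0

/-!
Both sides are bilinear, so it suffices to compare them on pairs of simple roots. Write
`c = s t` and `scs = t s`, and use `s α_s = -α_s`, `s α_b = α_b - a_{sb} α_s`. The entries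
of `E_c` and `E_{scs}` among the letters of `t` coincide, since moving `s` does not change
their relative order; moving `s` from the front to the back replaces the entries
`E(α_s, α_b) = 0`, `E(α_b, α_s) = δ_b a_{bs}` by `δ_s a_{sb}` and `0`, and these match up
after applying `s` precisely because `δ_b a_{bs} = δ_s a_{sb}`. The case of `s` final is the
initial case for `scs`, since `s² = 1`.
-/

namespace CoxeterGeomRep

variable {B W V : Type*} [Group W] [AddCommGroup V] [Module ℝ V]
  {M : CoxeterMatrix B} {cs : CoxeterSystem M W} (g : CoxeterGeomRep M cs V)

theorem ρ_simple_α_self (s : B) : g.ρ (cs.simple s) (g.α s) = -g.α s := by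
  rw [g.act, g.a_diag, two_smul, sub_add_cancel_left]

theorem ρ_simple_involutive (s : B) : Function.Involutive (g.ρ (cs.simple s)) := fun v => by
  rw [← LinearEquiv.mul_apply, ← map_mul, cs.simple_mul_simple_self, map_one,
    LinearEquiv.coe_one, id_eq]

end CoxeterGeomRep

namespace IsEulerForm

variable {B W V : Type*} [Group W] [AddCommGroup V] [Module ℝ V]
  {M : CoxeterMatrix B} {cs : CoxeterSystem M W} {g : CoxeterGeomRep M cs V}
  {l t u : List B} {F F' : V →ₗ[ℝ] V →ₗ[ℝ] ℝ} {b b' : B}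

theorem apply_α_get (hF : IsEulerForm cs g l F) (i j : Fin l.length) :
    F (g.α (l.get i)) (g.α (l.get j)) =
      g.δ (l.get i) * if (j : ℕ) < (i : ℕ) then g.a (l.get i) (l.get j)
        else if (i : ℕ) = (j : ℕ) then 1 else 0 := by
  rw [← hF i j, map_smul, LinearMap.smul_apply, smul_eq_mul, ← mul_assoc,
    mul_inv_cancel₀ (g.δ_pos _).ne', one_mul]

theorem of_append_left (hF : IsEulerForm cs g (t ++ u) F) : IsEulerForm cs g t F := by
  intro i j
  simpa [List.getElem_append_left] using hF ⟨i, by simp; omega⟩ ⟨j, by simp; omega⟩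

theorem of_append_right (hF : IsEulerForm cs g (t ++ u) F) : IsEulerForm cs g u F := by
  intro i j
  simpa using hF ⟨t.length + i, by simp⟩ ⟨t.length + j, by simp⟩

theorem apply_α_α_of_mem (hF : IsEulerForm cs g l F) (hb : b ∈ l) :
    F (g.α b) (g.α b) = g.δ b := by
  obtain ⟨i, rfl⟩ := List.mem_iff_get.mp hb
  simpa using hF.apply_α_get i i

theorem apply_α_α_eq (hF : IsEulerForm cs g l F) (hF' : IsEulerForm cs g l F')
    (hb : b ∈ l) (hb' : b' ∈ l) : F (g.α b) (g.α b') = F' (g.α b) (g.α b') := by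
  obtain ⟨i, rfl⟩ := List.mem_iff_get.mp hb
  obtain ⟨j, rfl⟩ := List.mem_iff_get.mp hb'
  rw [hF.apply_α_get, hF'.apply_α_get]

theorem append_apply_α_α_of_mem_left_right (hF : IsEulerForm cs g (t ++ u) F)
    (hb : b ∈ t) (hb' : b' ∈ u) : F (g.α b) (g.α b') = 0 := by
  obtain ⟨i, rfl⟩ := List.mem_iff_get.mp hb
  obtain ⟨j, rfl⟩ := List.mem_iff_get.mp hb'
  have := hF.apply_α_get ⟨i, by simp; omega⟩ ⟨t.length + j, by simp⟩
  simpa [List.getElem_append_left, show ¬ t.length + j < i by omega,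
    show (i : ℕ) ≠ t.length + j by omega] using this

theorem append_apply_α_α_of_mem_right_left (hF : IsEulerForm cs g (t ++ u) F)
    (hb : b ∈ u) (hb' : b' ∈ t) : F (g.α b) (g.α b') = g.δ b * g.a b b' := by
  obtain ⟨i, rfl⟩ := List.mem_iff_get.mp hb
  obtain ⟨j, rfl⟩ := List.mem_iff_get.mp hb'
  have := hF.apply_α_get ⟨t.length + i, by simp⟩ ⟨j, by simp; omega⟩
  simpa [List.getElem_append_left, show (j : ℕ) < t.length + i by omega] using this

theorem apply_eq_apply_ρ_simple_of_rotate {s : B}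
    (hall : ∀ b : B, b ∈ s :: t) (hF : IsEulerForm cs g ([s] ++ t) F)
    (hF' : IsEulerForm cs g (t ++ [s]) F') (x y : V) :
    F x y = F' (g.ρ (cs.simple s) x) (g.ρ (cs.simple s) y) := by
  suffices F = F'.compl₁₂ (g.ρ (cs.simple s)).toLinearMap (g.ρ (cs.simple s)).toLinearMap by
    rw [this]; rfl
  have hs : s ∈ [s] := List.mem_singleton_self s
  have hF's : F' (g.α s) (g.α s) = g.δ s := hF'.apply_α_α_of_mem (List.mem_append_right t hs)
  have hF'sb {b : B} (hb : b ∈ t) : F' (g.α s) (g.α b) = g.δ s * g.a s b :=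
    hF'.append_apply_α_α_of_mem_right_left hs hb
  have hF'bs {b : B} (hb : b ∈ t) : F' (g.α b) (g.α s) = 0 :=
    hF'.append_apply_α_α_of_mem_left_right hb hs
  have mem_tail (b : B) (hb : b ≠ s) : b ∈ t := (List.mem_cons.mp (hall b)).resolve_left hb
  refine LinearMap.ext_basis g.α g.α fun i j => ?_
  simp only [LinearMap.compl₁₂_apply, LinearEquiv.coe_coe]
  by_cases hi : i = s <;> by_cases hj : j = s
  · subst i j
    simp only [g.ρ_simple_α_self, map_neg, LinearMap.neg_apply, neg_neg]
    rw [hF's, hF.apply_α_α_of_mem (List.mem_append_left t hs)]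
  · subst i
    simp only [g.ρ_simple_α_self, g.act, map_neg, map_sub, map_smul, LinearMap.neg_apply,
      smul_eq_mul]
    rw [hF's, hF'sb (mem_tail j hj), hF.append_apply_α_α_of_mem_left_right hs (mem_tail j hj)]
    ring
  · subst j
    simp only [g.ρ_simple_α_self, g.act, map_neg, map_sub, map_smul, LinearMap.sub_apply,
      LinearMap.smul_apply, smul_eq_mul]
    rw [hF's, hF'bs (mem_tail i hi), hF.append_apply_α_α_of_mem_right_left (mem_tail i hi) hs]
    linear_combination g.symmetrize i s
  · simp only [g.act, map_sub, map_smul, LinearMap.sub_apply, LinearMap.smul_apply, smul_eq_mul]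
    rw [hF's, hF'bs (mem_tail i hi), hF'sb (mem_tail j hj),
      hF.of_append_right.apply_α_α_eq hF'.of_append_left (mem_tail i hi) (mem_tail j hj)]
    ring

end IsEulerForm

theorem euler_form_invariance_general
    {B W V : Type*} [Group W] [AddCommGroup V] [Module ℝ V]
    {M : CoxeterMatrix B} (cs : CoxeterSystem M W) (g : CoxeterGeomRep M cs V)
    (s : B) (l l' : List B) (hall : ∀ b : B, b ∈ l)
    (hrot : (∃ t, l = s :: t ∧ l' = t ++ [s]) ∨ (∃ t, l = t ++ [s] ∧ l' = s :: t))
    (F F' : V →ₗ[ℝ] V →ₗ[ℝ] ℝ)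
    (hF : IsEulerForm cs g l F) (hF' : IsEulerForm cs g l' F') :
    ∀ x y : V, F x y = F' (g.ρ (cs.simple s) x) (g.ρ (cs.simple s) y) := by
  rcases hrot with ⟨t, rfl, rfl⟩ | ⟨t, rfl, rfl⟩
  · exact hF.apply_eq_apply_ρ_simple_of_rotate hall hF'
  · have hall' (b : B) : b ∈ s :: t := by simpa [or_comm] using hall b
    intro x y
    rw [hF'.apply_eq_apply_ρ_simple_of_rotate hall' hF, g.ρ_simple_involutive s x,
      g.ρ_simple_involutive s y]

/-- Let `c` be the Coxeter element with reduced word `l` (an enumeration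
of the simple generators), and let `s` be initial or final in `c`, so that `l'` (the word
obtained by moving `s` from one end of `l` to the other) is a reduced word for `scs`.  If
`E_c` and `E_{scs}` are the corresponding Euler forms, then
`E_c(β^∨, β') = E_{scs}(s β^∨, s β')` for all `β^∨, β' ∈ V`. -/
theorem euler_form_invariance
    {B W V : Type*} [Group W] [AddCommGroup V] [Module ℝ V]
    {M : CoxeterMatrix B} (cs : CoxeterSystem M W) (g : CoxeterGeomRep M cs V)
    (s : B) (l l' : List B) (hnd : l.Nodup) (hall : ∀ b : B, b ∈ l)
    (hrot : (∃ t, l = s :: t ∧ l' = t ++ [s]) ∨ (∃ t, l = t ++ [s] ∧ l' = s :: t))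
    (F F' : V →ₗ[ℝ] V →ₗ[ℝ] ℝ)
    (hF : IsEulerForm cs g l F) (hF' : IsEulerForm cs g l' F') :
    ∀ x y : V, F x y = F' (g.ρ (cs.simple s) x) (g.ρ (cs.simple s) y) :=
  euler_form_invariance_general cs g s l l' hall hrot F F' hF hF'
end
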